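/- arXiv:1407.2136 — 3 statements merged into one kernel-verified Lean document; each statement's English description precedes it below -/
import Mathlib

section
/- Let → be a transitive orientation of a graph X and →' a transitive orientation of its complement, and let →'_R be the reversal of →'. Then L1 = → ∪ →' and L2 = → ∪ →'_R are strict linear orders on V(X), and the comparable pairs common to L1 and L2 are exactly the edges of X. -/
/-- `r` is a transitive orientation of the graph `X`. -/
def IsTransOrientation {V : Type*} (X : SimpleGraph V) (r : V → V → Prop) : Prop :=
  (∀ x y, X.Adj x y ↔ (r x y ∨ r y x)) ∧ (∀ x y, r x y → ¬ r y x) ∧ Transitive r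

/-! Every pair of distinct vertices is related by exactly one of `→` and `→'` in exactly one
direction, so `→ ∪ →'` is total and irreflexive. For transitivity, a mixed chain `a → b →' c`
cannot close up in the wrong direction: `c → a` would give the edge `c b`, and `c →' a` the
non-edge `b a`. Reversing `→'` turns the transitive orientation of `Xᶜ` into another one, so
both `L₁` and `L₂` are of this form. Finally `L₁` and `L₂` agree on `(x, y)` exactly when `x → y`,
because `x →' y` and `y →' x` exclude each other. -/

namespace IsTransOrientation

variable {V : Type*} {X : SimpleGraph V} {r r' : V → V → Prop}

theorem adj_of_rel (h : IsTransOrientation X r) {x y : V} (hxy : r x y) : X.Adj x y :=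
  (h.1 x y).2 (Or.inl hxy)

theorem flip (h : IsTransOrientation X r) : IsTransOrientation X (fun a b => r b a) := by
  obtain ⟨hadj, hasymm, htrans⟩ := h
  exact ⟨fun x y => (hadj x y).trans Or.comm, fun x y => hasymm y x,
    fun _ _ _ hab hbc => htrans hbc hab⟩

theorem rel_or_rel_of_ne (h : IsTransOrientation X r) (h' : IsTransOrientation Xᶜ r')
    {a b : V} (hne : a ≠ b) : (r a b ∨ r' a b) ∨ (r b a ∨ r' b a) := by
  by_cases hadj : X.Adj a b
  · rcases (h.1 a b).1 hadj with hab | hba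
    · exact Or.inl (Or.inl hab)
    · exact Or.inr (Or.inl hba)
  · rcases (h'.1 a b).1 ((X.compl_adj a b).2 ⟨hne, hadj⟩) with hab | hba
    · exact Or.inl (Or.inr hab)
    · exact Or.inr (Or.inr hba)

theorem rel_or_rel_of_rel_of_compl_rel (h : IsTransOrientation X r)
    (h' : IsTransOrientation Xᶜ r') {a b c : V} (hab : r a b) (hbc : r' b c) :
    r a c ∨ r' a c := by
  have hnadj_bc := ((X.compl_adj b c).1 (h'.adj_of_rel hbc)).2
  by_cases hadj : X.Adj a c
  · rcases (h.1 a c).1 hadj with hac | hca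
    · exact Or.inl hac
    · exact absurd (h.adj_of_rel (h.2.2 hca hab)).symm hnadj_bc
  · obtain rfl | hne := eq_or_ne a c
    · exact absurd (h.adj_of_rel hab).symm hnadj_bc
    rcases (h'.1 a c).1 ((X.compl_adj a c).2 ⟨hne, hadj⟩) with hac | hca
    · exact Or.inr hac
    · have hnadj_ba := ((X.compl_adj b a).1 (h'.adj_of_rel (h'.2.2 hbc hca))).2
      exact absurd (h.adj_of_rel hab).symm hnadj_ba

theorem isStrictTotalOrder_sup (h : IsTransOrientation X r) (h' : IsTransOrientation Xᶜ r') :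
    IsStrictTotalOrder V (fun a b => r a b ∨ r' a b) where
  trichotomous a b hab hba := by_contra fun hne => (h.rel_or_rel_of_ne h' hne).elim hab hba
  irrefl a := by
    rintro (haa | haa)
    · exact (h.adj_of_rel haa).ne rfl
    · exact (h'.adj_of_rel haa).ne rfl
  trans a b c := by
    rintro (hab | hab) (hbc | hbc)
    · exact Or.inl (h.2.2 hab hbc)
    · exact h.rel_or_rel_of_rel_of_compl_rel h' hab hbc
    · exact h.flip.rel_or_rel_of_rel_of_compl_rel h'.flip hbc hab
    · exact Or.inr (h'.2.2 hab hbc)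

end IsTransOrientation

theorem or_and_or_flip_iff_left {V : Type*} {r r' : V → V → Prop}
    (hasymm : ∀ x y, r' x y → ¬ r' y x) (x y : V) :
    ((r x y ∨ r' x y) ∧ (r x y ∨ r' y x)) ↔ r x y := by
  rw [← or_and_left]
  exact or_iff_left fun hxy => hasymm x y hxy.1 hxy.2

/-- Given transitive orientations of `X` and of its complement, `L₁ = → ∪ →'` and
`L₂ = → ∪ →'_R` are strict linear orders whose common comparable pairs are exactly
the edges of `X`. -/
theorem two_linear_orders_from_orientations {V : Type*} (X : SimpleGraph V)
    (r r' : V → V → Prop) (h : IsTransOrientation X r)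
    (h' : IsTransOrientation Xᶜ r') :
    IsStrictTotalOrder V (fun a b => r a b ∨ r' a b) ∧
    IsStrictTotalOrder V (fun a b => r a b ∨ r' b a) ∧
    ∀ x y, X.Adj x y ↔
      (((r x y ∨ r' x y) ∧ (r x y ∨ r' y x)) ∨
       ((r y x ∨ r' y x) ∧ (r y x ∨ r' x y))) := by
  refine ⟨h.isStrictTotalOrder_sup h', h.isStrictTotalOrder_sup h'.flip, fun x y => ?_⟩
  rw [or_and_or_flip_iff_left h'.2.1, or_and_or_flip_iff_left h'.2.1]
  exact h.1 x y
end

section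
/- Let X be a connected graph that is not a cycle and not a single vertex, and let C_X be obtained from X by subdividing each edge into a path of length four (i.e., replacing each edge x_i x_j = e_k by the path x_i, q_{ik}, r_k, q_{jk}, x_j). Then Aut(C_X) is isomorphic to Aut(X). -/
/-- The vertex set of the graph obtained from `X` by replacing each edge by a path
of length four: original vertices, incidence vertices `q` and edge vertices `r`. -/
def SubdivVert {V : Type*} (X : SimpleGraph V) : Type _ :=
  V ⊕ {p : V × X.edgeSet // p.1 ∈ (p.2 : Sym2 V)} ⊕ X.edgeSet

/-- The graph `C_X` obtained from `X` by replacing every edge `x_i x_j = e_k` by the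
path `x_i, q_{ik}, r_k, q_{jk}, x_j` of length four. -/
def subdivide4 {V : Type*} (X : SimpleGraph V) : SimpleGraph (SubdivVert X) :=
  SimpleGraph.fromRel (fun a b =>
    match a, b with
    | Sum.inl v, Sum.inr (Sum.inl q) => v = q.1.1
    | Sum.inr (Sum.inl q), Sum.inr (Sum.inr e) => q.1.2 = e
    | _, _ => False)

/-!
Every automorphism of `X` acts on `C_X`, and this gives an injective homomorphism
`Aut X →* Aut C_X`. For surjectivity, an automorphism `Ψ` of `C_X` must preserve the original
vertices. As `X` is finite, connected and not a cycle, some vertex `s` has degree `≠ 2`; all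
subdivision vertices have degree `2`, so `Ψ s` is original. A path of `C_X` ending at an original
vertex has length `≡ 0 [MOD 4]` exactly when it starts at an original vertex, so the original
vertices are those at distance `≡ 0 [MOD 4]` from `s`, which `Ψ` preserves. Finally, a walk of
length four between distinct original vertices runs along a subdivided edge, so the restriction
of `Ψ` to the original vertices is an automorphism of `X`, and it induces `Ψ`.
-/

namespace SimpleGraph

variable {V W : Type*} {G : SimpleGraph V} {G' : SimpleGraph W}

lemma ncard_neighborSet_cycleGraph {n : ℕ} (v : Fin (n + 3)) :
    ((cycleGraph (n + 3)).neighborSet v).ncard = 2 := by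
  rw [← Nat.card_coe_set_eq, Nat.card_eq_fintype_card, card_neighborSet_eq_degree,
    cycleGraph_degree_three_le]

lemma Copy.neighborSet_eq_image (f : Copy G' G) {a : W} (hfin : (G.neighborSet (f a)).Finite)
    (hle : (G.neighborSet (f a)).ncard ≤ (G'.neighborSet a).ncard) :
    G.neighborSet (f a) = f '' G'.neighborSet a := by
  have hf : Function.Injective f := f.injective
  refine (Set.eq_of_subset_of_ncard_le ?_ ?_ hfin).symm
  · rintro _ ⟨b, hb, rfl⟩
    exact f.toHom.map_adj hb
  · rwa [Set.ncard_image_of_injective _ hf]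

theorem Connected.exists_iso_cycleGraph [Finite V] (hconn : G.Connected)
    (h2 : ∀ v, (G.neighborSet v).ncard = 2) :
    ∃ n, 3 ≤ n ∧ Nonempty (G ≃g cycleGraph n) := by
  obtain ⟨v⟩ := hconn.nonempty
  obtain ⟨p, hp, -⟩ := IsCycles.exists_cycle_toSubgraph_verts_eq_connectedComponentSupp
    (c := G.connectedComponentMk v) (fun w _ => h2 w) rfl
    (Set.nonempty_of_ncard_ne_zero (by rw [h2]; norm_num))
  obtain ⟨n, hn⟩ : ∃ n, p.length = n + 3 :=
    ⟨p.length - 3, by have := hp.three_le_length; omega⟩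
  obtain ⟨f⟩ : cycleGraph (n + 3) ⊑ G :=
    (cycleGraph_isContained_iff (by omega)).mpr ⟨v, p, hp, hn⟩
  have hf : Function.Injective f := f.injective
  have hnbr (a : Fin (n + 3)) := f.neighborSet_eq_image (a := a)
    (Set.finite_of_ncard_pos (by rw [h2]; norm_num)) (by rw [h2, ncard_neighborSet_cycleGraph])
  have hsurj : Function.Surjective f := by
    intro w
    obtain ⟨q⟩ := hconn (f 0) w
    suffices ∀ u w (q : G.Walk u w), u ∈ Set.range f → w ∈ Set.range f from
      this _ _ q ⟨0, rfl⟩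
    intro u w q
    induction q with
    | nil => exact id
    | cons h _ ih =>
      rintro ⟨a, rfl⟩
      obtain ⟨b, -, hb⟩ := (hnbr a).le h
      exact ih ⟨b, hb⟩
  refine ⟨n + 3, by omega, ⟨(RelIso.symm ⟨Equiv.ofBijective f ⟨hf, hsurj⟩, ?_⟩)⟩⟩
  intro a b
  refine ⟨fun h => ?_, f.toHom.map_adj⟩
  obtain ⟨c, hc, hcb⟩ := (hnbr a).le h
  rwa [← hf hcb]

lemma Reachable.dist_map_le (f : G →g G') {u v : V} (h : G.Reachable u v) :
    G'.dist (f u) (f v) ≤ G.dist u v := by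
  obtain ⟨p, hp⟩ := h.exists_walk_length_eq_dist
  exact hp ▸ p.length_map f ▸ dist_le (p.map f)

lemma Iso.dist_map (φ : G ≃g G') (u v : V) : G'.dist (φ u) (φ v) = G.dist u v := by
  by_cases h : G.Reachable u v
  · refine le_antisymm (h.dist_map_le φ.toHom) ?_
    simpa using (Iso.reachable_iff (φ := φ) |>.mpr h).dist_map_le φ.symm.toHom
  · rw [dist_eq_zero_of_not_reachable h,
      dist_eq_zero_of_not_reachable (mt Iso.reachable_iff.mp h)]

end SimpleGraph

namespace Subdivide4

open SimpleGraph Sum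

variable {V W : Type*} {X : SimpleGraph V} {Y : SimpleGraph W}

abbrev Incidence (X : SimpleGraph V) := {p : V × X.edgeSet // p.1 ∈ (p.2 : Sym2 V)}

/-- `subdivide4 X` on the unfolded vertex type, so that `simp` sees the constructors of `⊕`. -/
def C (X : SimpleGraph V) : SimpleGraph (V ⊕ Incidence X ⊕ X.edgeSet) := subdivide4 X

section Adjacency

variable {a b : V} {q q' : Incidence X} {e e' : X.edgeSet}

@[simp] lemma not_adj_inl_inl : ¬(C X).Adj (inl a) (inl b) := by
  change ¬(_ ≠ _ ∧ (_ ∨ _)); simp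

@[simp] lemma adj_inl_inc : (C X).Adj (inl a) (inr (inl q)) ↔ a = q.1.1 := by
  change (_ ≠ _ ∧ (_ ∨ _)) ↔ _; simpa using fun _ => nofun

@[simp] lemma adj_inc_inl : (C X).Adj (inr (inl q)) (inl a) ↔ a = q.1.1 := by
  change (_ ≠ _ ∧ (_ ∨ _)) ↔ _; simpa using fun _ => nofun

@[simp] lemma not_adj_inl_edge : ¬(C X).Adj (inl a) (inr (inr e)) := by
  change ¬(_ ≠ _ ∧ (_ ∨ _)); simp

@[simp] lemma not_adj_edge_inl : ¬(C X).Adj (inr (inr e)) (inl a) := by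
  change ¬(_ ≠ _ ∧ (_ ∨ _)); simp

@[simp] lemma not_adj_inc_inc : ¬(C X).Adj (inr (inl q)) (inr (inl q')) := by
  change ¬(_ ≠ _ ∧ (_ ∨ _)); simp

@[simp] lemma adj_inc_edge : (C X).Adj (inr (inl q)) (inr (inr e)) ↔ e = q.1.2 := by
  change (_ ≠ _ ∧ (_ ∨ _)) ↔ _; simpa [eq_comm] using fun _ => nofun

@[simp] lemma adj_edge_inc : (C X).Adj (inr (inr e)) (inr (inl q)) ↔ e = q.1.2 := by
  change (_ ≠ _ ∧ (_ ∨ _)) ↔ _; simpa [eq_comm] using fun _ => nofun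

@[simp] lemma not_adj_edge_edge : ¬(C X).Adj (inr (inr e)) (inr (inr e')) := by
  change ¬(_ ≠ _ ∧ (_ ∨ _)); simp

end Adjacency

def edgeOf {a b : V} (h : X.Adj a b) : X.edgeSet := ⟨s(a, b), h⟩

def incOf {a b : V} (h : X.Adj a b) : Incidence X := ⟨(a, edgeOf h), Sym2.mem_mk_left a b⟩

@[simp] lemma incOf_fst {a b : V} (h : X.Adj a b) : (incOf h).1.1 = a := rfl

@[simp] lemma incOf_snd {a b : V} (h : X.Adj a b) : (incOf h).1.2 = edgeOf h := rfl

lemma edgeOf_symm {a b : V} (h : X.Adj a b) : edgeOf h.symm = edgeOf h :=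
  Subtype.ext Sym2.eq_swap

lemma exists_eq_incOf (q : Incidence X) : ∃ a b, ∃ h : X.Adj a b, q = incOf h := by
  have hspec := Sym2.other_spec q.2
  refine ⟨q.1.1, Sym2.Mem.other q.2, by rw [← mem_edgeSet, hspec]; exact q.1.2.2, ?_⟩
  exact Subtype.ext (Prod.ext rfl (Subtype.ext hspec.symm))

lemma exists_eq_edgeOf (e : X.edgeSet) : ∃ a b, ∃ h : X.Adj a b, e = edgeOf h := by
  obtain ⟨z, hz⟩ := e
  induction z using Sym2.ind with
  | _ a b => exact ⟨a, b, hz, rfl⟩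

lemma eq_incOf_or_eq_incOf_symm {a b : V} (h : X.Adj a b) {q : Incidence X}
    (hq : q.1.2 = edgeOf h) : q = incOf h ∨ q = incOf h.symm := by
  have hmem : q.1.1 ∈ s(a, b) := by have := q.2; rwa [hq] at this
  rcases Sym2.mem_iff.mp hmem with ha | hb
  · exact Or.inl (Subtype.ext (Prod.ext ha hq))
  · exact Or.inr (Subtype.ext (Prod.ext hb (hq.trans (edgeOf_symm h).symm)))

lemma neighborSet_inc (q : Incidence X) :
    (C X).neighborSet (inr (inl q)) = {inl q.1.1, inr (inr q.1.2)} := by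
  ext (v | q' | e) <;> simp

lemma neighborSet_edge {a b : V} (h : X.Adj a b) :
    (C X).neighborSet (inr (inr (edgeOf h))) =
      {inr (inl (incOf h)), inr (inl (incOf h.symm))} := by
  ext (v | q | e)
  · simp
  · simp only [mem_neighborSet, adj_edge_inc, Set.mem_insert_iff, Set.mem_singleton_iff,
      inr.injEq, inl.injEq]
    refine ⟨fun hq => eq_incOf_or_eq_incOf_symm h hq.symm, ?_⟩
    rintro (rfl | rfl)
    · rfl
    · exact (edgeOf_symm h).symm
  · simp

lemma neighborSet_inl (v : V) :
    (C X).neighborSet (inl v) = Set.range fun w : X.neighborSet v => inr (inl (incOf w.2)) := by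
  ext (u | q | e)
  · simp
  · simp only [mem_neighborSet, adj_inl_inc, Set.mem_range, inr.injEq, inl.injEq, Subtype.exists]
    constructor
    · rintro rfl
      obtain ⟨a, b, h, rfl⟩ := exists_eq_incOf q
      exact ⟨b, h, rfl⟩
    · rintro ⟨b, h, rfl⟩
      rfl
  · simp

lemma ncard_neighborSet_inc (q : Incidence X) : ((C X).neighborSet (inr (inl q))).ncard = 2 := by
  rw [neighborSet_inc, Set.ncard_pair (by simp)]

lemma ncard_neighborSet_edge (e : X.edgeSet) : ((C X).neighborSet (inr (inr e))).ncard = 2 := by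
  obtain ⟨a, b, h, rfl⟩ := exists_eq_edgeOf e
  rw [neighborSet_edge, Set.ncard_pair]
  intro heq
  simp only [inr.injEq, inl.injEq] at heq
  exact h.ne (congrArg (fun q : Incidence X => q.1.1) heq)

lemma ncard_neighborSet_inl (v : V) :
    ((C X).neighborSet (inl v)).ncard = (X.neighborSet v).ncard := by
  rw [neighborSet_inl, Set.ncard_range_of_injective, Nat.card_coe_set_eq]
  intro w w' h
  simpa [incOf, edgeOf, Subtype.ext_iff, w'.2.ne] using h

lemma exists_eq_inl_of_ncard_ne_two {x : V ⊕ Incidence X ⊕ X.edgeSet}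
    (hx : ((C X).neighborSet x).ncard ≠ 2) : ∃ v, x = inl v := by
  rcases x with v | q | e
  · exact ⟨v, rfl⟩
  · exact absurd (ncard_neighborSet_inc q) hx
  · exact absurd (ncard_neighborSet_edge e) hx

def incidenceEquiv (φ : X ≃g Y) : Incidence X ≃ Incidence Y :=
  (φ.toEquiv.prodCongr φ.mapEdgeSet).subtypeEquiv fun p => by
    simp [Hom.mapEdgeSet, Sym2.mem_map, φ.injective.eq_iff]

@[simp] lemma incidenceEquiv_fst (φ : X ≃g Y) (q : Incidence X) :
    (incidenceEquiv φ q).1.1 = φ q.1.1 := rfl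

@[simp] lemma incidenceEquiv_snd (φ : X ≃g Y) (q : Incidence X) :
    (incidenceEquiv φ q).1.2 = φ.mapEdgeSet q.1.2 := rfl

def mapIso (φ : X ≃g Y) : C X ≃g C Y where
  toEquiv := φ.toEquiv.sumCongr ((incidenceEquiv φ).sumCongr φ.mapEdgeSet)
  map_rel_iff' := by
    rintro (a | q | e) (b | q' | e') <;>
      simp [-Iso.mapEdgeSet_apply, φ.injective.eq_iff, φ.mapEdgeSet.injective.eq_iff]

@[simp] lemma mapIso_inl (φ : X ≃g Y) (v : V) : mapIso φ (inl v) = inl (φ v) := rfl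

@[simp] lemma mapIso_inc (φ : X ≃g Y) (q : Incidence X) :
    mapIso φ (inr (inl q)) = inr (inl (incidenceEquiv φ q)) := rfl

@[simp] lemma mapIso_edge (φ : X ≃g Y) (e : X.edgeSet) :
    mapIso φ (inr (inr e)) = inr (inr (φ.mapEdgeSet e)) := rfl

def mapIsoHom : (X ≃g X) →* (C X ≃g C X) :=
  MonoidHom.mk' mapIso fun φ ψ => by
    have hE (e : X.edgeSet) : (φ * ψ).mapEdgeSet e = φ.mapEdgeSet (ψ.mapEdgeSet e) :=
      Subtype.ext (Sym2.map_map (g := φ) (f := ψ) (e : Sym2 V)).symm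
    ext (v | q | e)
    · rfl
    · simp only [RelIso.mul_apply, mapIso_inc, inr.injEq, inl.injEq]
      exact Subtype.ext (Prod.ext rfl (hE q.1.2))
    · simp only [RelIso.mul_apply, mapIso_edge, inr.injEq]
      exact hE e

lemma mapIsoHom_injective : Function.Injective (mapIsoHom (X := X)) := fun _ _ h =>
  RelIso.ext fun v => inl_injective (congrArg (· (inl v)) h)

lemma reachable_inl_of_adj {a b : V} (h : X.Adj a b) : (C X).Reachable (inl a) (inl b) :=
  ⟨.cons (v := inr (inl (incOf h))) (by simp) <| .cons (v := inr (inr (edgeOf h))) (by simp) <|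
    .cons (v := inr (inl (incOf h.symm))) (adj_edge_inc.mpr (edgeOf_symm h).symm) <|
    .cons (by simp) .nil⟩

lemma connected (hconn : X.Connected) : (C X).Connected := by
  have hinl (a b : V) : (C X).Reachable (inl a) (inl b) := by
    obtain ⟨p⟩ := hconn a b
    induction p with
    | nil => rfl
    | cons h _ ih => exact (reachable_inl_of_adj h).trans ih
  have hto_inl : ∀ x, ∃ v, (C X).Reachable x (inl v)
    | inl v => ⟨v, .rfl⟩
    | inr (inl q) => ⟨q.1.1, Adj.reachable (by simp)⟩
    | inr (inr e) => by
      obtain ⟨a, b, h, rfl⟩ := exists_eq_edgeOf e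
      exact ⟨a, (Adj.reachable (v := inr (inl (incOf h))) (by simp)).trans
        (Adj.reachable (by simp))⟩
  have : Nonempty (V ⊕ Incidence X ⊕ X.edgeSet) := ⟨inl hconn.nonempty.some⟩
  refine ⟨fun x y => ?_⟩
  obtain ⟨a, ha⟩ := hto_inl x
  obtain ⟨b, hb⟩ := hto_inl y
  exact ha.trans ((hinl a b).trans hb.symm)

/-- The distance from `x` to the original vertex reached by leaving `x` towards its neighbour `y`
along a subdivided edge. -/
def level : V ⊕ Incidence X ⊕ X.edgeSet → V ⊕ Incidence X ⊕ X.edgeSet → ℕ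
  | inl _, _ => 0
  | inr (inl _), inl _ => 1
  | inr (inl _), _ => 3
  | inr (inr _), _ => 2

lemma length_mod_four_of_isPath {j : V} :
    ∀ {x : V ⊕ Incidence X ⊕ X.edgeSet} (p : (C X).Walk x (inl j)), p.IsPath →
      p.length % 4 = level x p.snd
  | _, .nil, _ => rfl
  | x, .cons (v := y) hxy p, hp => by
    rw [Walk.cons_isPath_iff] at hp
    have ih := length_mod_four_of_isPath p hp.1
    have hx : x ≠ p.snd := fun h => hp.2 (h ▸ p.getVert_mem_support 1)
    have hy : y ≠ inl j → (C X).Adj y p.snd := fun h => p.adj_snd (Walk.not_nil_of_ne h)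
    rw [Walk.length_cons, Walk.snd_cons]
    generalize p.snd = z at ih hx hy
    rcases x with a | q | e <;> rcases y with b | q' | e' <;> rcases z with c | q'' | e'' <;>
      simp_all [level] <;> omega

lemma dist_inl_mod_four_eq_zero_iff (hconn : X.Connected) {x : V ⊕ Incidence X ⊕ X.edgeSet}
    {j : V} : (C X).dist x (inl j) % 4 = 0 ↔ ∃ v, x = inl v := by
  obtain ⟨p, hp, hlen⟩ := (connected hconn).exists_path_of_dist x (inl j)
  rw [← hlen, length_mod_four_of_isPath p hp]
  generalize p.snd = z
  rcases x with a | q | e <;> rcases z with b | q' | e' <;> simp [level]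

lemma exists_map_inl_eq_inl (hconn : X.Connected) {s : V} (hs : (X.neighborSet s).ncard ≠ 2)
    (Ψ : C X ≃g C X) (v : V) : ∃ w, Ψ (inl v) = inl w := by
  have hΨs : ((C X).neighborSet (Ψ (inl s))).ncard ≠ 2 := by
    rwa [← Nat.card_coe_set_eq, ← Nat.card_congr (Ψ.mapNeighborSet (inl s)),
      Nat.card_coe_set_eq, ncard_neighborSet_inl]
  obtain ⟨t, ht⟩ := exists_eq_inl_of_ncard_ne_two hΨs
  rw [← dist_inl_mod_four_eq_zero_iff hconn (j := t), ← ht, Iso.dist_map,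
    dist_inl_mod_four_eq_zero_iff hconn]
  exact ⟨v, rfl⟩

lemma exists_adj_of_adj_adj_adj_adj {a b : V} (hab : a ≠ b)
    {x y z : V ⊕ Incidence X ⊕ X.edgeSet} (h₁ : (C X).Adj (inl a) x) (h₂ : (C X).Adj x y)
    (h₃ : (C X).Adj y z) (h₄ : (C X).Adj z (inl b)) :
    ∃ h : X.Adj a b, x = inr (inl (incOf h)) ∧ y = inr (inr (edgeOf h)) := by
  rcases x with _ | q | _ <;> simp only [not_adj_inl_inl, not_adj_inl_edge, adj_inl_inc] at h₁
  rcases y with c | _ | e <;> simp only [adj_inc_inl, not_adj_inc_inc, adj_inc_edge] at h₂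
  · rcases z with _ | q' | _ <;> simp only [not_adj_inl_inl, not_adj_inl_edge, adj_inl_inc,
      adj_inc_inl] at h₃ h₄
    exact absurd (h₁.trans (h₂.symm.trans (h₃.trans h₄.symm))) hab
  rcases z with _ | q' | _ <;> simp only [not_adj_edge_inl, not_adj_edge_edge, adj_edge_inc,
    adj_inc_inl] at h₃ h₄
  have he : (e : Sym2 V) = s(a, b) := (Sym2.mem_and_mem_iff hab).mp
    ⟨h₁ ▸ h₂ ▸ q.2, h₄ ▸ h₃ ▸ q'.2⟩
  have h : X.Adj a b := by rw [← mem_edgeSet, ← he]; exact e.2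
  have hedge : e = edgeOf h := Subtype.ext he
  refine ⟨h, ?_, congrArg _ (congrArg _ hedge)⟩
  exact congrArg _ (congrArg _ (Subtype.ext (Prod.ext h₁.symm (h₂.symm.trans hedge))))

lemma exists_map_incOf {Ψ : C X ≃g C X} {θ : V → V} (hθ : ∀ v, Ψ (inl v) = inl (θ v))
    {a b : V} (h : X.Adj a b) : ∃ h' : X.Adj (θ a) (θ b),
      Ψ (inr (inl (incOf h))) = inr (inl (incOf h')) ∧
      Ψ (inr (inr (edgeOf h))) = inr (inr (edgeOf h')) := by
  have hne : θ a ≠ θ b := fun he => h.ne (inl_injective (Ψ.injective (by rw [hθ, hθ, he])))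
  have hmap {x y} (hxy : (C X).Adj x y) : (C X).Adj (Ψ x) (Ψ y) := Ψ.map_adj_iff.mpr hxy
  have h₁ := hmap (x := inl a) (y := inr (inl (incOf h))) (by simp)
  have h₂ := hmap (x := inr (inl (incOf h))) (y := inr (inr (edgeOf h))) (by simp)
  have h₃ := hmap (x := inr (inr (edgeOf h))) (y := inr (inl (incOf h.symm)))
    (adj_edge_inc.mpr (edgeOf_symm h).symm)
  have h₄ := hmap (x := inr (inl (incOf h.symm))) (y := inl b) (by simp)
  rw [hθ] at h₁ h₄
  exact exists_adj_of_adj_adj_adj_adj hne h₁ h₂ h₃ h₄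

lemma eq_one_of_map_inl_eq {Ψ : C X ≃g C X} (hΨ : ∀ v, Ψ (inl v) = inl v) : Ψ = 1 := by
  ext (v | q | e)
  · exact hΨ v
  · obtain ⟨a, b, h, rfl⟩ := exists_eq_incOf q
    exact (exists_map_incOf (θ := id) hΨ h).choose_spec.1
  · obtain ⟨a, b, h, rfl⟩ := exists_eq_edgeOf e
    exact (exists_map_incOf (θ := id) hΨ h).choose_spec.2

lemma mapIsoHom_surjective (hmap : ∀ (Ψ : C X ≃g C X) v, ∃ w, Ψ (inl v) = inl w) :
    Function.Surjective (mapIsoHom (X := X)) := by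
  intro Ψ
  choose θ hθ using hmap Ψ
  choose θ' hθ' using hmap Ψ⁻¹
  have hθ'θ (v : V) : θ' (θ v) = v :=
    inl_injective <| by rw [← hθ', ← hθ]; exact Ψ.symm_apply_apply _
  have hθθ' (v : V) : θ (θ' v) = v :=
    inl_injective <| by rw [← hθ, ← hθ']; exact Ψ.apply_symm_apply _
  let φ : X ≃g X := ⟨⟨θ, θ', hθ'θ, hθθ'⟩, fun {a b} =>
    ⟨fun h => by simpa [hθ'θ] using (exists_map_incOf hθ' h).fst,
      fun h => (exists_map_incOf hθ h).fst⟩⟩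
  refine ⟨φ, inv_mul_eq_one.mp (eq_one_of_map_inl_eq fun v => ?_)⟩
  show (mapIso φ).symm (Ψ (inl v)) = inl v
  rw [hθ, RelIso.symm_apply_eq]
  rfl

end Subdivide4

theorem aut_subdivide4_general {V : Type*} [Fintype V] (X : SimpleGraph V)
    (hconn : X.Connected)
    (hcycle : ∀ n : ℕ, 3 ≤ n → IsEmpty (X ≃g SimpleGraph.cycleGraph n)) :
    Nonempty ((subdivide4 X ≃g subdivide4 X) ≃* (X ≃g X)) := by
  obtain ⟨s, hs⟩ : ∃ s, (X.neighborSet s).ncard ≠ 2 := by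
    by_contra! h
    obtain ⟨n, hn, ⟨φ⟩⟩ := hconn.exists_iso_cycleGraph h
    exact (hcycle n hn).false φ
  exact ⟨(MulEquiv.ofBijective Subdivide4.mapIsoHom ⟨Subdivide4.mapIsoHom_injective,
    Subdivide4.mapIsoHom_surjective (Subdivide4.exists_map_inl_eq_inl hconn hs)⟩).symm⟩

theorem aut_subdivide4 {V : Type*} [Fintype V] (X : SimpleGraph V)
    (hconn : X.Connected)
    (hcycle : ∀ n : ℕ, 3 ≤ n → IsEmpty (X ≃g SimpleGraph.cycleGraph n))
    (hcard : Fintype.card V ≠ 1) :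
    Nonempty ((subdivide4 X ≃g subdivide4 X) ≃* (X ≃g X)) :=
  aut_subdivide4_general X hconn hcycle
end

section
/- Let X be a prime interval graph (an interval graph whose only modules are trivial). Then Aut(X) is isomorphic to a subgroup of Z2. -/
/-!
Orient every non-edge `uv` of the interval graph `X` from the left interval to the right one:
`u ≺ v ↔ hi u < lo v`. This is a transitive orientation of `Xᶜ`. Following Gallai, the
non-edges on which two transitive orientations of `Xᶜ` agree and those on which they disagree form
a split that is closed under forcing, and in a prime graph such a split is trivial; so `Xᶜ` has
only the orientations `≺` and its reverse, and every automorphism preserves or reverses `≺`.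
An automorphism `σ` preserving `≺` is the identity: the sets of intervals lying left of `v` and of
`σ v` have the same size and are nested, hence equal, and likewise on the right, so `v` and `σ v`
are twins and `{v, σ v}` is a module. Thus `Aut X` has at most two elements.
-/

/-- A module of a simple graph: every vertex outside `M` is adjacent to all of `M`
or to none of `M`. -/
def SimpleGraph.IsModule {V : Type*} (X : SimpleGraph V) (M : Set V) : Prop :=
  ∀ x ∉ M, (∀ m ∈ M, X.Adj x m) ∨ (∀ m ∈ M, ¬ X.Adj x m)

/-- `X` is an interval graph: the intersection graph of closed real intervals. -/
def IsIntervalGraph {V : Type*} (X : SimpleGraph V) : Prop :=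
  ∃ lo hi : V → ℝ, (∀ v, lo v ≤ hi v) ∧
    ∀ u v, X.Adj u v ↔
      u ≠ v ∧ (Set.Icc (lo u) (hi u) ∩ Set.Icc (lo v) (hi v)).Nonempty

open Function Set Relation

theorem Set.eq_of_ncard_eq_of_subset_or_subset {α : Type*} [Finite α] {s t : Set α}
    (h : s ⊆ t ∨ t ⊆ s) (hst : s.ncard = t.ncard) : s = t := by
  rcases h with h | h
  · exact eq_of_subset_of_ncard_le h hst.ge
  · exact (eq_of_subset_of_ncard_le h hst.le).symm

theorem exists_injective_monoidHom_zmod_two {G : Type*} [Group G] [Finite G]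
    (h : Nat.card G ≤ 2) : ∃ f : G →* Multiplicative (ZMod 2), Injective f := by
  have : 0 < Nat.card G := Nat.card_pos
  interval_cases hG : Nat.card G
  · have : Subsingleton G := (Nat.card_eq_one_iff_unique.1 hG).1
    exact ⟨1, injective_of_subsingleton _⟩
  · exact ⟨(mulEquivOfPrimeCardEq hG (by simp)).toMonoidHom, MulEquiv.injective _⟩

namespace SimpleGraph

variable {V : Type*} {X A B : SimpleGraph V}

instance {W : Type*} [Finite V] [Finite W] {G : SimpleGraph V} {H : SimpleGraph W} :
    Finite (G ≃g H) :=
  Finite.of_injective _ RelIso.toEquiv_injective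

def IsPrime (X : SimpleGraph V) : Prop :=
  ∀ M : Set V, X.IsModule M → M = univ ∨ M.Subsingleton

theorem isModule_pair {x y : V} (h : ∀ z, z ≠ x → z ≠ y → (X.Adj z x ↔ X.Adj z y)) :
    X.IsModule {x, y} := by
  intro z hz
  simp only [mem_insert_iff, mem_singleton_iff, not_or] at hz
  have hzy := h z hz.1 hz.2
  by_cases hzx : X.Adj z x
  · exact Or.inl (by rintro m (rfl | rfl) <;> tauto)
  · exact Or.inr (by rintro m (rfl | rfl) <;> tauto)

theorem IsPrime.eq_of_isModule_pair [Finite V] (hX : X.IsPrime) (hV : 2 < Nat.card V) {x y : V}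
    (h : X.IsModule {x, y}) : x = y := by
  refine (hX _ h).resolve_left (fun huniv => ?_) (mem_insert x _) (mem_insert_of_mem x rfl)
  have := ncard_insert_le x {y}
  rw [huniv, ncard_univ, ncard_singleton] at this
  omega

theorem isModule_setOf_reflTransGen {R : V → V → Prop} (hR : ∀ ⦃p q⦄, R p q → R q p) {b : V}
    (h : ∀ ⦃p q x⦄, ReflTransGen R b p → R p q → ¬ ReflTransGen R b x →
      Xᶜ.Adj x p → Xᶜ.Adj x q) :
    X.IsModule {x | ReflTransGen R b x} := by
  intro x hx
  have hconst : ∀ p, ReflTransGen R b p → (Xᶜ.Adj x p ↔ Xᶜ.Adj x b) := by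
    intro p hp
    induction hp with
    | refl => rfl
    | tail hbp hpq ih =>
      exact ⟨fun hq => ih.1 (h (hbp.tail hpq) (hR hpq) hx hq), fun hb => h hbp hpq hx (ih.2 hb)⟩
  by_cases hb : Xᶜ.Adj x b
  · exact Or.inr fun m hm => ((compl_adj _ _ _).1 ((hconst m hm).2 hb)).2
  · refine Or.inl fun m hm => not_not.1 fun hxm => hb ((hconst m hm).1 ?_)
    exact (compl_adj _ _ _).2 ⟨by rintro rfl; exact hx hm, hxm⟩

/-- Gallai's relation `Γ` forces non-edges `sx` and `sy` into the same class unless `xy` is also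
a non-edge; `A` and `B` cover the non-edges of `X` and never separate a `Γ`-forced pair. -/
structure IsGammaSplit (X A B : SimpleGraph V) : Prop where
  compl_le_sup : Xᶜ ≤ A ⊔ B
  compl_adj_of_adj : ∀ ⦃s x y⦄, A.Adj s x → B.Adj s y → Xᶜ.Adj x y

theorem IsGammaSplit.symm (h : IsGammaSplit X A B) : IsGammaSplit X B A :=
  ⟨sup_comm A B ▸ h.compl_le_sup, fun _ _ _ hx hy => (h.compl_adj_of_adj hy hx).symm⟩

theorem IsGammaSplit.not_adj_of_adj_of_adj (hX : X.IsPrime) (h : IsGammaSplit X A B)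
    {a b c : V} (hab : B.Adj a b) (hac : B.Adj a c) : ¬ A.Adj b c := by
  intro hbc
  -- the `A`-component of `b` inside the `B`-neighbourhood of `a` is a module avoiding `a`
  let R : V → V → Prop := fun p q => A.Adj p q ∧ B.Adj a p ∧ B.Adj a q
  have hmem : ∀ x, ReflTransGen R b x → B.Adj a x := fun x hx => by
    rcases hx.cases_tail with rfl | ⟨p, -, hpx⟩
    exacts [hab, hpx.2.2]
  have hmod : X.IsModule {x | ReflTransGen R b x} := by
    refine isModule_setOf_reflTransGen (fun p q hpq => ⟨hpq.1.symm, hpq.2.2, hpq.2.1⟩) ?_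
    intro p q x hbp hpq hx hxp
    obtain ⟨hpq', hap, haq⟩ := hpq
    by_contra hxq
    have hxq : X.Adj x q := not_not.1 fun hn =>
      hxq ((compl_adj _ _ _).2 ⟨by rintro rfl; exact hx (hbp.tail ⟨hpq', hap, haq⟩), hn⟩)
    rcases h.compl_le_sup hxp.symm with hpx | hpx
    · rcases h.compl_le_sup (h.compl_adj_of_adj hpx hap.symm).symm with hax | hax
      · exact ((compl_adj _ _ _).1 (h.compl_adj_of_adj hax haq)).2 hxq
      · exact hx (hbp.tail ⟨hpx, hap, hax⟩)
    · exact ((compl_adj _ _ _).1 (h.compl_adj_of_adj hpq' hpx)).2 hxq.symm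
  rcases hX _ hmod with hC | hC
  · have ha : a ∈ {x | ReflTransGen R b x} := hC ▸ mem_univ a
    exact B.irrefl (hmem a ha)
  · exact A.ne_of_adj hbc (hC ReflTransGen.refl (ReflTransGen.single ⟨hbc, hab, hac⟩))

theorem IsPrime.eq_bot_or_eq_bot (hX : X.IsPrime) (h : IsGammaSplit X A B) : A = ⊥ ∨ B = ⊥ := by
  have hunmixed : ∀ ⦃s x y⦄, A.Adj s x → ¬ B.Adj s y := by
    intro s x y hsx hsy
    rcases h.compl_le_sup (h.compl_adj_of_adj hsx hsy) with hxy | hxy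
    · exact h.symm.not_adj_of_adj_of_adj hX hsx.symm hxy hsy
    · exact h.not_adj_of_adj_of_adj hX hsy.symm hxy.symm hsx
  have hmod : X.IsModule A.support := by
    refine fun x hx => Or.inl fun m ⟨w, hmw⟩ => not_not.1 fun hxm => ?_
    have hne : x ≠ m := by rintro rfl; exact hx ⟨w, hmw⟩
    rcases h.compl_le_sup ((compl_adj _ _ _).2 ⟨hne, hxm⟩) with hxm' | hxm'
    · exact hx ⟨m, hxm'⟩
    · exact hunmixed hmw hxm'.symm
  by_contra hAB
  obtain ⟨hA, hB⟩ := not_or.1 hAB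
  obtain ⟨u, v, huv⟩ := ne_bot_iff_exists_adj.1 hA
  obtain ⟨s, y, hsy⟩ := ne_bot_iff_exists_adj.1 hB
  rcases hX _ hmod with hW | hW
  · obtain ⟨x, hsx⟩ : s ∈ A.support := hW ▸ mem_univ s
    exact hunmixed hsx hsy
  · exact A.ne_of_adj huv (hW ⟨v, huv⟩ ⟨u, huv.symm⟩)

structure IsTransitiveOrientation (G : SimpleGraph V) (r : V → V → Prop) : Prop where
  trans : ∀ ⦃a b c⦄, r a b → r b c → r a c
  adj_iff : ∀ u v, G.Adj u v ↔ r u v ∨ r v u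

namespace IsTransitiveOrientation

variable {G : SimpleGraph V} {r s : V → V → Prop}

theorem irrefl (hr : G.IsTransitiveOrientation r) {u : V} : ¬ r u u :=
  fun h => G.irrefl ((hr.adj_iff u u).2 (Or.inl h))

theorem flip (hr : G.IsTransitiveOrientation r) : G.IsTransitiveOrientation (_root_.flip r) :=
  ⟨fun _ _ _ h₁ h₂ => hr.trans h₂ h₁, fun u v => (hr.adj_iff u v).trans or_comm⟩

theorem comap {W : Type*} {H : SimpleGraph W} {r : W → W → Prop} (f : G ↪g H)
    (hr : H.IsTransitiveOrientation r) : G.IsTransitiveOrientation fun u v => r (f u) (f v) :=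
  ⟨fun _ _ _ h₁ h₂ => hr.trans h₁ h₂, fun _ _ => f.map_adj_iff.symm.trans (hr.adj_iff _ _)⟩

theorem eq_of_le (hr : G.IsTransitiveOrientation r) (hs : G.IsTransitiveOrientation s)
    (h : r ≤ s) : r = s := by
  funext u v
  refine propext ⟨h u v, fun hsuv => ?_⟩
  rcases (hr.adj_iff u v).1 ((hs.adj_iff u v).2 (Or.inl hsuv)) with huv | hvu
  · exact huv
  · exact absurd (hs.trans hsuv (h v u hvu)) hs.irrefl

end IsTransitiveOrientation

theorem IsPrime.eq_or_eq_flip_of_isTransitiveOrientation (hX : X.IsPrime) {r s : V → V → Prop}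
    (hr : Xᶜ.IsTransitiveOrientation r) (hs : Xᶜ.IsTransitiveOrientation s) :
    r = s ∨ flip r = s := by
  let A := fromRel fun u v => r u v ∧ s u v
  let B := fromRel fun u v => r u v ∧ s v u
  have hsplit : IsGammaSplit X A B := by
    constructor
    · intro u v huv
      have hne := Xᶜ.ne_of_adj huv
      rcases (hr.adj_iff u v).1 huv with h1 | h1 <;> rcases (hs.adj_iff u v).1 huv with h2 | h2 <;>
        simp [A, B, fromRel_adj, hne, h1, h2]
    · intro t x y htx hty
      simp only [A, B, fromRel_adj] at htx hty
      rcases htx with ⟨-, ⟨hr1, hs1⟩ | ⟨hr1, hs1⟩⟩ <;> rcases hty with ⟨-, ⟨hr2, hs2⟩ | ⟨hr2, hs2⟩⟩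
      · exact (hs.adj_iff x y).2 (Or.inr (hs.trans hs2 hs1))
      · exact (hr.adj_iff x y).2 (Or.inr (hr.trans hr2 hr1))
      · exact (hr.adj_iff x y).2 (Or.inl (hr.trans hr1 hr2))
      · exact (hs.adj_iff x y).2 (Or.inl (hs.trans hs1 hs2))
  rcases hX.eq_bot_or_eq_bot hsplit with hA | hB
  · refine Or.inr (hr.flip.eq_of_le hs fun u v hvu => ?_)
    have huv : Xᶜ.Adj v u := (hr.adj_iff v u).2 (Or.inl hvu)
    refine ((hs.adj_iff u v).1 huv.symm).resolve_right fun hsvu => ?_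
    have : A.Adj v u := (fromRel_adj _ _ _).2 ⟨Xᶜ.ne_of_adj huv, Or.inl ⟨hvu, hsvu⟩⟩
    rw [hA] at this
    exact this
  · refine Or.inl (hr.eq_of_le hs fun u v huv => ?_)
    have huv' : Xᶜ.Adj u v := (hr.adj_iff u v).2 (Or.inl huv)
    refine ((hs.adj_iff u v).1 huv').resolve_right fun hsvu => ?_
    have : B.Adj u v := (fromRel_adj _ _ _).2 ⟨Xᶜ.ne_of_adj huv', Or.inl ⟨huv, hsvu⟩⟩
    rw [hB] at this
    exact this

theorem isTransitiveOrientation_compl_of_intervals {α : Type*} [LinearOrder α] {lo hi : V → α}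
    (hlo : ∀ v, lo v ≤ hi v)
    (hX : ∀ u v, X.Adj u v ↔ u ≠ v ∧ (Icc (lo u) (hi u) ∩ Icc (lo v) (hi v)).Nonempty) :
    Xᶜ.IsTransitiveOrientation fun u v => hi u < lo v where
  trans _ v _ huv hvw := huv.trans ((hlo v).trans_lt hvw)
  adj_iff u v := by
    rw [compl_adj, hX, Icc_inter_Icc, nonempty_Icc]
    by_cases huv : u = v
    · subst huv
      simp [not_lt.2 (hlo u)]
    · simp only [ne_eq, huv, not_false_eq_true, true_and, sup_le_iff, le_inf_iff, hlo, and_true,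
        not_and_or, not_le]

theorem IsPrime.eq_one_of_forall_lt_iff [Finite V] (hX : X.IsPrime) (hV : 2 < Nat.card V)
    {α : Type*} [LinearOrder α] {lo hi : V → α}
    (hr : Xᶜ.IsTransitiveOrientation fun u v => hi u < lo v) {σ : X ≃g X}
    (hσ : ∀ u v, hi (σ u) < lo (σ v) ↔ hi u < lo v) : σ = 1 := by
  have hcard : ∀ s : Set V, (σ ⁻¹' s).ncard = s.ncard := fun s =>
    ncard_preimage_of_injective_subset_range σ.injective (σ.surjective.range_eq ▸ subset_univ s)
  ext v
  have hdown : {x | hi x < lo (σ v)} = {x | hi x < lo v} := by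
    refine eq_of_ncard_eq_of_subset_or_subset ((le_total (lo (σ v)) (lo v)).imp ?_ ?_) ?_
    · exact fun h x hx => lt_of_lt_of_le hx h
    · exact fun h x hx => lt_of_lt_of_le hx h
    · calc {x | hi x < lo (σ v)}.ncard = {x | hi (σ x) < lo (σ v)}.ncard := (hcard _).symm
        _ = {x | hi x < lo v}.ncard := by simp only [hσ]
  have hup : {x | hi (σ v) < lo x} = {x | hi v < lo x} := by
    refine eq_of_ncard_eq_of_subset_or_subset ((le_total (hi v) (hi (σ v))).imp ?_ ?_) ?_
    · exact fun h x hx => lt_of_le_of_lt h hx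
    · exact fun h x hx => lt_of_le_of_lt h hx
    · calc {x | hi (σ v) < lo x}.ncard = {x | hi (σ v) < lo (σ x)}.ncard := (hcard _).symm
        _ = {x | hi v < lo x}.ncard := by simp only [hσ]
  rw [RelIso.one_apply]
  refine (hX.eq_of_isModule_pair hV (isModule_pair fun z hzσ hzv => ?_))
  have hadj : ∀ w, z ≠ w → (X.Adj z w ↔ ¬ (hi z < lo w ∨ hi w < lo z)) := fun w hzw => by
    rw [← hr.adj_iff, compl_adj]
    tauto
  have h1 : hi z < lo (σ v) ↔ hi z < lo v := Set.ext_iff.1 hdown z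
  have h2 : hi (σ v) < lo z ↔ hi v < lo z := Set.ext_iff.1 hup z
  rw [hadj _ hzσ, hadj _ hzv, h1, h2]

theorem IsPrime.forall_lt_iff_or_forall_lt_iff (hX : X.IsPrime) {α : Type*} [LinearOrder α]
    {lo hi : V → α} (hr : Xᶜ.IsTransitiveOrientation fun u v => hi u < lo v) (σ : X ≃g X) :
    (∀ u v, hi (σ u) < lo (σ v) ↔ hi u < lo v) ∨ (∀ u v, hi (σ u) < lo (σ v) ↔ hi v < lo u) := by
  rcases hX.eq_or_eq_flip_of_isTransitiveOrientation hr
    (hr.comap (Embedding.complEquiv σ.toEmbedding)) with h | h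
  · exact Or.inl fun u v => Iff.of_eq (congrFun₂ h u v).symm
  · exact Or.inr fun u v => Iff.of_eq (congrFun₂ h u v).symm

theorem IsPrime.card_iso_le_two [Finite V] (hX : X.IsPrime) {α : Type*} [LinearOrder α]
    {lo hi : V → α} (hr : Xᶜ.IsTransitiveOrientation fun u v => hi u < lo v) :
    Nat.card (X ≃g X) ≤ 2 := by
  by_cases hV : Nat.card V ≤ 2
  · calc Nat.card (X ≃g X) ≤ Nat.card (Equiv.Perm V) :=
          Nat.card_le_card_of_injective _ RelIso.toEquiv_injective
      _ = (Nat.card V).factorial := Nat.card_perm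
      _ ≤ 2 := Nat.factorial_le hV
  classical
  let preserves (σ : X ≃g X) : Prop := ∀ u v, hi (σ u) < lo (σ v) ↔ hi u < lo v
  have hinj : Injective fun σ => decide (preserves σ) := by
    intro σ τ hστ
    rw [← inv_mul_eq_one]
    refine hX.eq_one_of_forall_lt_iff (not_le.1 hV) hr fun u v => ?_
    simp only [RelIso.mul_apply]
    by_cases hσ : preserves σ
    · have hτ : preserves τ := by simpa [hσ] using hστ
      rw [← hσ, RelIso.apply_inv_self, RelIso.apply_inv_self, hτ]
    · have hτ : ¬ preserves τ := by simpa [hσ] using hστ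
      have hσ' := (hX.forall_lt_iff_or_forall_lt_iff hr σ).resolve_left hσ
      have hτ' := (hX.forall_lt_iff_or_forall_lt_iff hr τ).resolve_left hτ
      rw [← hσ', RelIso.apply_inv_self, RelIso.apply_inv_self, hτ']
  simpa using Nat.card_le_card_of_injective _ hinj

end SimpleGraph

/-- The automorphism group of a prime interval graph embeds into `Z₂`. -/
theorem prime_interval_graph_aut_le_z2 {V : Type*} [Fintype V] (X : SimpleGraph V)
    (hint : IsIntervalGraph X)
    (hprime : ∀ M : Set V, X.IsModule M → M = Set.univ ∨ M.Subsingleton) :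
    ∃ f : (X ≃g X) →* Multiplicative (ZMod 2), Function.Injective f := by
  obtain ⟨lo, hi, hlo, hadj⟩ := hint
  have hX : X.IsPrime := hprime
  exact exists_injective_monoidHom_zmod_two
    (hX.card_iso_le_two (SimpleGraph.isTransitiveOrientation_compl_of_intervals hlo hadj))
end
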